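/- arXiv:1312.7006 — 3 statements merged into one kernel-verified Lean document; each statement's English description precedes it below -/
import Mathlib

section
/- Let β₁*, β₂* ∈ ℝᵖ and set α := ‖β₁*−β₂*‖₂² / (‖β₁*‖₂² + ‖β₂*‖₂²) (assuming the denominator is nonzero). For any matrix H ∈ ℝ^{p×p} and any vector h ∈ ℝᵖ, the sum Σ_{b=1,2} ‖H − 2β_b* hᵀ‖_F² is at least α·(‖β₁*‖₂+‖β₂*‖₂)²·‖h‖₂². -/
noncomputable def frobSq {p : ℕ} (M : Matrix (Fin p) (Fin p) ℝ) : ℝ :=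
  ∑ i, ∑ j, (M i j) ^ 2

noncomputable def nrm {p : ℕ} (v : Fin p → ℝ) : ℝ :=
  Real.sqrt (∑ i, (v i) ^ 2)

theorem lower_bound_h {p : ℕ} (β₁ β₂ : Fin p → ℝ)
    (hne : (∑ i, (β₁ i) ^ 2) + (∑ i, (β₂ i) ^ 2) ≠ 0)
    (H : Matrix (Fin p) (Fin p) ℝ) (h : Fin p → ℝ) :
    ((∑ i, (β₁ i - β₂ i) ^ 2) / ((∑ i, (β₁ i) ^ 2) + (∑ i, (β₂ i) ^ 2)))
        * (nrm β₁ + nrm β₂) ^ 2 * (∑ i, (h i) ^ 2)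
      ≤ frobSq (H - (2 : ℝ) • Matrix.vecMulVec β₁ h)
          + frobSq (H - (2 : ℝ) • Matrix.vecMulVec β₂ h) := by
  set D : ℝ := ∑ i, (β₁ i - β₂ i) ^ 2 with hD
  set S₁ : ℝ := ∑ i, (β₁ i) ^ 2 with hS1
  set S₂ : ℝ := ∑ i, (β₂ i) ^ 2 with hS2
  set N : ℝ := ∑ i, (h i) ^ 2 with hN
  have hD0 : 0 ≤ D := Finset.sum_nonneg fun i _ => sq_nonneg _
  have hS10 : 0 ≤ S₁ := Finset.sum_nonneg fun i _ => sq_nonneg _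
  have hS20 : 0 ≤ S₂ := Finset.sum_nonneg fun i _ => sq_nonneg _
  have hN0 : 0 ≤ N := Finset.sum_nonneg fun i _ => sq_nonneg _
  have hSpos : 0 < S₁ + S₂ := lt_of_le_of_ne (by linarith) (Ne.symm hne)
  -- step 1: (nrm β₁ + nrm β₂)^2 ≤ 2 * (S₁ + S₂)
  have hsq : (nrm β₁ + nrm β₂) ^ 2 ≤ 2 * (S₁ + S₂) := by
    have h1 : (nrm β₁) ^ 2 = S₁ := Real.sq_sqrt hS10
    have h2 : (nrm β₂) ^ 2 = S₂ := Real.sq_sqrt hS20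
    have h3 : 0 ≤ nrm β₁ := Real.sqrt_nonneg _
    have h4 : 0 ≤ nrm β₂ := Real.sqrt_nonneg _
    nlinarith [sq_nonneg (nrm β₁ - nrm β₂)]
  have step1 : D / (S₁ + S₂) * (nrm β₁ + nrm β₂) ^ 2 * N ≤ 2 * D * N := by
    have hdiv : 0 ≤ D / (S₁ + S₂) := div_nonneg hD0 hSpos.le
    have : D / (S₁ + S₂) * (nrm β₁ + nrm β₂) ^ 2 ≤ D / (S₁ + S₂) * (2 * (S₁ + S₂)) :=
      mul_le_mul_of_nonneg_left hsq hdiv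
    have heq : D / (S₁ + S₂) * (2 * (S₁ + S₂)) = 2 * D := by
      field_simp
    calc D / (S₁ + S₂) * (nrm β₁ + nrm β₂) ^ 2 * N
        ≤ D / (S₁ + S₂) * (2 * (S₁ + S₂)) * N := mul_le_mul_of_nonneg_right this hN0
      _ = 2 * D * N := by rw [heq]
  refine step1.trans ?_
  -- step 2: pointwise
  have key : ∀ i j, 2 * ((β₁ i - β₂ i) ^ 2 * (h j) ^ 2)
      ≤ (H i j - 2 * (β₁ i * h j)) ^ 2 + (H i j - 2 * (β₂ i * h j)) ^ 2 := by
    intro i j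
    nlinarith [sq_nonneg (2 * H i j - 2 * (β₁ i * h j) - 2 * (β₂ i * h j))]
  have hrw : 2 * D * N = ∑ i, ∑ j, 2 * ((β₁ i - β₂ i) ^ 2 * (h j) ^ 2) := by
    rw [hD, hN, mul_assoc,
      Finset.sum_mul_sum Finset.univ Finset.univ (fun i => (β₁ i - β₂ i) ^ 2)
        (fun j => (h j) ^ 2), Finset.mul_sum]
    refine Finset.sum_congr rfl fun i _ => ?_
    rw [Finset.mul_sum]
  rw [hrw, frobSq, frobSq, ← Finset.sum_add_distrib]
  apply Finset.sum_le_sum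
  intro i _
  rw [← Finset.sum_add_distrib]
  apply Finset.sum_le_sum
  intro j _
  simpa [Matrix.vecMulVec, Matrix.sub_apply, Matrix.smul_apply, mul_assoc] using key i j
end

section
/- Let β₁*, β₂* ∈ ℝᵖ, not both zero, and set α := ‖β₁*−β₂*‖₂²/(‖β₁*‖₂²+‖β₂*‖₂²). For any H ∈ ℝ^{p×p} and h ∈ ℝᵖ, Σ_{b=1,2} ‖H − 2β_b* hᵀ‖_F² ≥ α·‖H‖_F². -/
lemma col_bound {p : ℕ} (β₁ β₂ x : Fin p → ℝ) (t : ℝ) :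
    (∑ i, (β₁ i - β₂ i) ^ 2) * (∑ i, x i ^ 2)
      ≤ ((∑ i, (x i - t * β₁ i) ^ 2) + (∑ i, (x i - t * β₂ i) ^ 2))
          * ((∑ i, (β₁ i) ^ 2) + (∑ i, (β₂ i) ^ 2)) := by
  have cs := Finset.sum_mul_sq_le_sq_mul_sq Finset.univ x (fun i => β₁ i + β₂ i)
  have e1 : ∀ (β : Fin p → ℝ), ∑ i, (x i - t * β i) ^ 2
      = ∑ i, x i ^ 2 - 2 * t * ∑ i, x i * β i + t ^ 2 * ∑ i, β i ^ 2 := by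
    intro β
    rw [Finset.mul_sum, Finset.mul_sum, ← Finset.sum_sub_distrib, ← Finset.sum_add_distrib]
    exact Finset.sum_congr rfl fun i _ => by ring
  have e2 : ∑ i, (β₁ i - β₂ i) ^ 2
      = ∑ i, β₁ i ^ 2 - 2 * ∑ i, β₁ i * β₂ i + ∑ i, β₂ i ^ 2 := by
    rw [Finset.mul_sum, ← Finset.sum_sub_distrib, ← Finset.sum_add_distrib]
    exact Finset.sum_congr rfl fun i _ => by ring
  have e3 : ∑ i, x i * (β₁ i + β₂ i) = ∑ i, x i * β₁ i + ∑ i, x i * β₂ i := by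
    rw [← Finset.sum_add_distrib]; exact Finset.sum_congr rfl fun i _ => by ring
  have e4 : ∑ i, (β₁ i + β₂ i) ^ 2
      = ∑ i, β₁ i ^ 2 + 2 * ∑ i, β₁ i * β₂ i + ∑ i, β₂ i ^ 2 := by
    rw [Finset.mul_sum, ← Finset.sum_add_distrib, ← Finset.sum_add_distrib]
    exact Finset.sum_congr rfl fun i _ => by ring
  rw [e1, e1, e2] at *
  rw [e3, e4] at cs
  nlinarith [sq_nonneg (((∑ i, β₁ i ^ 2) + ∑ i, β₂ i ^ 2) * t - ((∑ i, x i * β₁ i) + ∑ i, x i * β₂ i)), Finset.sum_nonneg (fun i (_ : i ∈ Finset.univ) => sq_nonneg (x i))]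

theorem lower_bound_H {p : ℕ} (β₁ β₂ : Fin p → ℝ)
    (hpos : 0 < (∑ i, (β₁ i) ^ 2) + (∑ i, (β₂ i) ^ 2))
    (H : Matrix (Fin p) (Fin p) ℝ) (h : Fin p → ℝ) :
    ((∑ i, (β₁ i - β₂ i) ^ 2) / ((∑ i, (β₁ i) ^ 2) + (∑ i, (β₂ i) ^ 2)))
        * frobSq H
      ≤ frobSq (H - (2 : ℝ) • Matrix.vecMulVec β₁ h)
          + frobSq (H - (2 : ℝ) • Matrix.vecMulVec β₂ h) := by
  rw [div_mul_eq_mul_div, div_le_iff₀ hpos]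
  unfold frobSq
  simp only [Matrix.sub_apply, Matrix.smul_apply, Matrix.vecMulVec_apply, smul_eq_mul]
  rw [Finset.sum_comm (f := fun i j => (H i j) ^ 2),
      Finset.sum_comm (f := fun i j => (H i j - 2 * (β₁ i * h j)) ^ 2),
      Finset.sum_comm (f := fun i j => (H i j - 2 * (β₂ i * h j)) ^ 2),
      Finset.mul_sum, ← Finset.sum_add_distrib, Finset.sum_mul]
  apply Finset.sum_le_sum
  intro j _
  have key := col_bound β₁ β₂ (fun i => H i j) (2 * h j)
  have r1 : ∀ (β : Fin p → ℝ), ∑ i, (H i j - 2 * (β i * h j)) ^ 2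
      = ∑ i, (H i j - 2 * h j * β i) ^ 2 :=
    fun β => Finset.sum_congr rfl fun i _ => by ring
  rw [r1, r1]
  exact key
end

section
/- Let Q_a denote the equal-weight mixture of the Gaussian distributions N(a,σ²) and N(−a,σ²) on ℝ. For any u ≥ v ≥ 0, the Kullback–Leibler divergence satisfies D(Q_u ‖ Q_v) ≤ ((u² − v²)/(2σ⁴))·u². -/
/-- Density of the Gaussian distribution `N(a, σ²)`. -/
noncomputable def gaussPdf (σ a x : ℝ) : ℝ :=
  (Real.sqrt (2 * Real.pi * σ ^ 2))⁻¹ * Real.exp (-(x - a) ^ 2 / (2 * σ ^ 2))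

/-- Density of the equal-weight mixture of `N(a, σ²)` and `N(-a, σ²)`. -/
noncomputable def mixPdf (σ a x : ℝ) : ℝ :=
  (1 / 2) * gaussPdf σ a x + (1 / 2) * gaussPdf σ (-a) x

/-! Writing `f_a(x) = φ_σ(x) · exp (-a²/(2σ²)) · cosh (a x/σ²)`, the log-likelihood ratio is
`log (f_u / f_v) = log cosh (u x/σ²) - log cosh (v x/σ²) - (u² - v²)/(2σ²)`.
Since `s ↦ s²/2 - log cosh s` is even and increasing on `[0, ∞)` (its derivative is
`s - tanh s`), the difference of the `log cosh` terms is at most `(u² - v²) x²/(2σ⁴)`.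
Integrating this quadratic bound against `f_u`, whose second moment is `σ² + u²`,
gives `(u² - v²) u²/(2σ⁴)`. -/

open Real MeasureTheory ProbabilityTheory NNReal

lemma sinh_le_mul_cosh {s : ℝ} (hs : 0 ≤ s) : sinh s ≤ s * cosh s := by
  have hderiv (x : ℝ) : HasDerivAt (fun s ↦ s * cosh s - sinh s) (x * sinh x) x :=
    (((hasDerivAt_id' x).mul (hasDerivAt_cosh x)).sub (hasDerivAt_sinh x)).congr_deriv (by ring)
  have hmono : MonotoneOn (fun s ↦ s * cosh s - sinh s) (Set.Ici 0) :=
    monotoneOn_of_deriv_nonneg (convex_Ici 0)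
      (fun x _ ↦ (hderiv x).continuousAt.continuousWithinAt)
      (fun x _ ↦ (hderiv x).differentiableAt.differentiableWithinAt) fun x hx ↦ by
        rw [interior_Ici] at hx
        rw [(hderiv x).deriv]
        exact mul_nonneg hx.le (sinh_nonneg_iff.mpr hx.le)
  simpa using hmono Set.self_mem_Ici hs hs

lemma monotoneOn_sq_div_two_sub_log_cosh :
    MonotoneOn (fun s ↦ s ^ 2 / 2 - log (cosh s)) (Set.Ici 0) := by
  have hderiv (x : ℝ) :
      HasDerivAt (fun s ↦ s ^ 2 / 2 - log (cosh s)) (x - sinh x / cosh x) x :=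
    (((hasDerivAt_pow 2 x).div_const 2).sub
      ((hasDerivAt_cosh x).log (cosh_pos x).ne')).congr_deriv (by ring)
  refine monotoneOn_of_deriv_nonneg (convex_Ici 0)
    (fun x _ ↦ (hderiv x).continuousAt.continuousWithinAt)
    (fun x _ ↦ (hderiv x).differentiableAt.differentiableWithinAt) fun x hx ↦ ?_
  rw [interior_Ici] at hx
  rw [(hderiv x).deriv, sub_nonneg, div_le_iff₀ (cosh_pos x)]
  exact sinh_le_mul_cosh hx.le

lemma log_cosh_sub_log_cosh_le {s t : ℝ} (h : |s| ≤ |t|) :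
    log (cosh t) - log (cosh s) ≤ (t ^ 2 - s ^ 2) / 2 := by
  have := monotoneOn_sq_div_two_sub_log_cosh (abs_nonneg s) (abs_nonneg t) h
  simp only [sq_abs, cosh_abs] at this
  linarith

section Gaussian

variable (μ : ℝ) (v : ℝ≥0) (c d : ℝ)

lemma integrable_sq_gaussianReal : Integrable (fun x ↦ x ^ 2) (gaussianReal μ v) :=
  (memLp_id_gaussianReal 2).integrable_sq

lemma integral_sq_gaussianReal : ∫ x, x ^ 2 ∂gaussianReal μ v = v + μ ^ 2 := by
  have h := variance_eq_sub (memLp_id_gaussianReal (μ := μ) (v := v) 2)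
  simp only [variance_id_gaussianReal, Pi.pow_apply, id_eq, integral_id_gaussianReal] at h
  linarith

lemma integrable_quadratic_gaussianReal :
    Integrable (fun x ↦ c * x ^ 2 + d) (gaussianReal μ v) :=
  ((integrable_sq_gaussianReal μ v).const_mul c).add (integrable_const d)

lemma integral_quadratic_gaussianReal :
    ∫ x, c * x ^ 2 + d ∂gaussianReal μ v = c * (v + μ ^ 2) + d := by
  rw [integral_add ((integrable_sq_gaussianReal μ v).const_mul c) (integrable_const d),
    integral_const_mul, integral_sq_gaussianReal]
  simp

variable {v}

lemma integrable_gaussianPDFReal_mul_iff (hv : v ≠ 0) {f : ℝ → ℝ} :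
    Integrable (fun x ↦ gaussianPDFReal μ v x * f x) ↔ Integrable f (gaussianReal μ v) := by
  rw [gaussianReal_of_var_ne_zero μ hv, integrable_withDensity_iff_integrable_smul'
    (measurable_gaussianPDF μ v) (ae_of_all _ fun _ ↦ gaussianPDF_lt_top)]
  simp [toReal_gaussianPDF]

lemma integral_gaussianPDFReal_mul (hv : v ≠ 0) (f : ℝ → ℝ) :
    ∫ x, gaussianPDFReal μ v x * f x = ∫ x, f x ∂gaussianReal μ v := by
  simp [integral_gaussianReal_eq_integral_smul hv]

end Gaussian

lemma gaussPdf_eq_gaussianPDFReal (σ a : ℝ) :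
    gaussPdf σ a = gaussianPDFReal a (σ ^ 2).toNNReal := by
  rw [gaussianPDFReal_def, Real.coe_toNNReal _ (sq_nonneg σ)]
  rfl

section Mixture

variable {σ : ℝ} (c d : ℝ)

lemma gaussPdf_pos (hσ : σ ≠ 0) (a x : ℝ) : 0 < gaussPdf σ a x :=
  gaussPdf_eq_gaussianPDFReal σ a ▸ gaussianPDFReal_pos a _ x (by simpa using hσ)

lemma mixPdf_pos (hσ : σ ≠ 0) (a x : ℝ) : 0 < mixPdf σ a x := by
  have := gaussPdf_pos hσ a x
  have := gaussPdf_pos hσ (-a) x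
  unfold mixPdf
  positivity

lemma integrable_gaussPdf_mul_quadratic (hσ : σ ≠ 0) (a : ℝ) :
    Integrable (fun x ↦ gaussPdf σ a x * (c * x ^ 2 + d)) := by
  rw [gaussPdf_eq_gaussianPDFReal, integrable_gaussianPDFReal_mul_iff]
  · exact integrable_quadratic_gaussianReal _ _ c d
  · simpa using hσ

lemma integral_gaussPdf_mul_quadratic (hσ : σ ≠ 0) (a : ℝ) :
    ∫ x, gaussPdf σ a x * (c * x ^ 2 + d) = c * (σ ^ 2 + a ^ 2) + d := by
  rw [gaussPdf_eq_gaussianPDFReal, integral_gaussianPDFReal_mul, integral_quadratic_gaussianReal]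
  · rw [Real.coe_toNNReal _ (sq_nonneg σ)]
  · simpa using hσ

lemma integrable_mixPdf_mul_quadratic (hσ : σ ≠ 0) (a : ℝ) :
    Integrable (fun x ↦ mixPdf σ a x * (c * x ^ 2 + d)) := by
  simp only [mixPdf, add_mul, mul_assoc]
  exact ((integrable_gaussPdf_mul_quadratic c d hσ a).const_mul _).add
    ((integrable_gaussPdf_mul_quadratic c d hσ (-a)).const_mul _)

lemma integral_mixPdf_mul_quadratic (hσ : σ ≠ 0) (a : ℝ) :
    ∫ x, mixPdf σ a x * (c * x ^ 2 + d) = c * (σ ^ 2 + a ^ 2) + d := by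
  simp only [mixPdf, add_mul, mul_assoc]
  rw [integral_add ((integrable_gaussPdf_mul_quadratic c d hσ a).const_mul _)
    ((integrable_gaussPdf_mul_quadratic c d hσ (-a)).const_mul _), integral_const_mul,
    integral_const_mul, integral_gaussPdf_mul_quadratic c d hσ,
    integral_gaussPdf_mul_quadratic c d hσ]
  ring

lemma mixPdf_eq_gaussPdf_mul_cosh (σ a x : ℝ) :
    mixPdf σ a x = gaussPdf σ 0 x * (exp (-a ^ 2 / (2 * σ ^ 2)) * cosh (a * x / σ ^ 2)) := by
  have hexp (b : ℝ) (hb : b ^ 2 = a ^ 2) : exp (-(x - b) ^ 2 / (2 * σ ^ 2)) =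
      exp (-(x - 0) ^ 2 / (2 * σ ^ 2)) *
        (exp (-a ^ 2 / (2 * σ ^ 2)) * exp (b * x / σ ^ 2)) := by
    rw [← exp_add, ← exp_add, ← hb]
    ring_nf
  unfold mixPdf gaussPdf
  rw [hexp a rfl, hexp (-a) (neg_sq a), cosh_eq]
  ring_nf

lemma log_mixPdf_div_mixPdf (hσ : σ ≠ 0) (u v x : ℝ) :
    log (mixPdf σ u x / mixPdf σ v x) =
      log (cosh (u * x / σ ^ 2)) - log (cosh (v * x / σ ^ 2)) -
        (u ^ 2 - v ^ 2) / (2 * σ ^ 2) := by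
  rw [mixPdf_eq_gaussPdf_mul_cosh, mixPdf_eq_gaussPdf_mul_cosh,
    mul_div_mul_left _ _ (gaussPdf_pos hσ 0 x).ne',
    log_div (by positivity) (by positivity), log_mul (by positivity) (cosh_pos _).ne',
    log_mul (by positivity) (cosh_pos _).ne', log_exp, log_exp]
  ring

lemma log_mixPdf_div_mixPdf_le {u v : ℝ} (hσ : σ ≠ 0) (huv : |v| ≤ |u|) (x : ℝ) :
    log (mixPdf σ u x / mixPdf σ v x) ≤
      (u ^ 2 - v ^ 2) / (2 * σ ^ 4) * x ^ 2 - (u ^ 2 - v ^ 2) / (2 * σ ^ 2) := by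
  have hcosh : log (cosh (u * x / σ ^ 2)) - log (cosh (v * x / σ ^ 2)) ≤
      ((u * x / σ ^ 2) ^ 2 - (v * x / σ ^ 2) ^ 2) / 2 := by
    apply log_cosh_sub_log_cosh_le
    simp only [abs_div, abs_mul]
    gcongr
  have hsq : ((u * x / σ ^ 2) ^ 2 - (v * x / σ ^ 2) ^ 2) / 2 =
      (u ^ 2 - v ^ 2) / (2 * σ ^ 4) * x ^ 2 := by ring
  rw [log_mixPdf_div_mixPdf hσ]
  linarith

end Mixture

-- Spares an integrability proof for `f`: if `f` is not integrable, then `∫ f = 0`.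
lemma integral_le_integral_of_le_of_integral_nonneg {α : Type*} [MeasurableSpace α]
    {μ : Measure α} {f g : α → ℝ} (hfg : f ≤ g) (hg : Integrable g μ) (hg0 : 0 ≤ ∫ x, g x ∂μ) :
    ∫ x, f x ∂μ ≤ ∫ x, g x ∂μ := by
  by_cases hf : Integrable f μ
  · exact integral_mono hf hg hfg
  · rwa [integral_undef hf]

theorem kl_mixture_bound_high (σ u v : ℝ) (hσ : 0 < σ)
    (hv : 0 ≤ v) (hvu : v ≤ u) :
    ∫ x : ℝ, mixPdf σ u x * Real.log (mixPdf σ u x / mixPdf σ v x)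
      ≤ ((u ^ 2 - v ^ 2) / (2 * σ ^ 4)) * u ^ 2 := by
  have huv : |v| ≤ |u| := by rwa [abs_of_nonneg hv, abs_of_nonneg (hv.trans hvu)]
  set c := (u ^ 2 - v ^ 2) / (2 * σ ^ 4) with hc_def
  set d := -((u ^ 2 - v ^ 2) / (2 * σ ^ 2)) with hd_def
  have hbound (x : ℝ) : mixPdf σ u x * log (mixPdf σ u x / mixPdf σ v x) ≤
      mixPdf σ u x * (c * x ^ 2 + d) :=
    mul_le_mul_of_nonneg_left ((log_mixPdf_div_mixPdf_le hσ.ne' huv x).trans_eq (by ring))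
      (mixPdf_pos hσ.ne' u x).le
  have hmoment : c * (σ ^ 2 + u ^ 2) + d = c * u ^ 2 := by
    rw [hc_def, hd_def]
    field_simp
    ring
  have hc : 0 ≤ c * u ^ 2 := by
    have hsq : v ^ 2 ≤ u ^ 2 := sq_le_sq.mpr huv
    positivity
  calc ∫ x, mixPdf σ u x * log (mixPdf σ u x / mixPdf σ v x)
      ≤ ∫ x, mixPdf σ u x * (c * x ^ 2 + d) :=
        integral_le_integral_of_le_of_integral_nonneg hbound
          (integrable_mixPdf_mul_quadratic c d hσ.ne' u) (by
            rwa [integral_mixPdf_mul_quadratic c d hσ.ne', hmoment])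
    _ = c * u ^ 2 := by rw [integral_mixPdf_mul_quadratic c d hσ.ne', hmoment]
end
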